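/- The set of Ψ-types satisfied in a dependence model forms a type model: if Σ = type_Ψ(s) for some s in the team and ¬𝔻_X ¬ψ ∈ Σ, then there exists t in the team with Δ = type_Ψ(t), ψ ∈ Δ, and Σ ∼_X Δ; moreover type_Ψ(s) ∼_∅ type_Ψ(t) for all s,t in the team. -/
import Mathlib


/-- LFD formulas over predicate symbols `Sig` and variables `V`. -/
inductive Formula (Sig V : Type) where
  | atom : Sig → List V → Formula Sig V
  | neg : Formula Sig V → Formula Sig V
  | and : Formula Sig V → Formula Sig V → Formula Sig V
  | dmod : Set V → Formula Sig V → Formula Sig V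
  | dep : Set V → V → Formula Sig V

/-- `agree s t X` : the assignments `s` and `t` agree on all variables in `X` (`s =_X t`). -/
def agree {V O : Type} (s t : V → O) (X : Set V) : Prop := ∀ x ∈ X, s x = t x

/-- LFD semantics on a dependence model given by interpretation `I` and team `A`. -/
def satisfies {Sig V O : Type} (I : Sig → List O → Prop) (A : Set (V → O)) :
    (V → O) → Formula Sig V → Prop
  | s, .atom p xs => I p (xs.map s)
  | s, .neg φ => ¬ satisfies I A s φ
  | s, .and φ ψ => satisfies I A s φ ∧ satisfies I A s ψ
  | s, .dmod X φ => ∀ t ∈ A, agree s t X → satisfies I A t φ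
  | s, .dep X y => ∀ t ∈ A, agree s t X → s y = t y

/-- Free variables of an LFD formula. -/
def free {Sig V : Type} : Formula Sig V → Set V
  | .atom _ xs => {x | x ∈ xs}
  | .neg φ => free φ
  | .and φ ψ => free φ ∪ free ψ
  | .dmod X _ => X
  | .dep X _ => X

/-- Dependence closure of X with respect to a set of formulas Σ. -/
def depCl {Sig V : Type} (S : Set (Formula Sig V)) (X : Set V) : Set V :=
  {y | Formula.dep X y ∈ S}

/-- The relation Σ ∼_X Δ on sets of formulas. -/
def simRel {Sig V : Type} (S D : Set (Formula Sig V)) (X : Set V) : Prop :=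
  {φ ∈ S | free φ ⊆ depCl S X} = {φ ∈ D | free φ ⊆ depCl S X}

/-- The Ψ-type of an assignment s in a dependence model. -/
def typeOf {Sig V O : Type} (I : Sig → List O → Prop) (A : Set (V → O))
    (Ψ : Set (Formula Sig V)) (s : V → O) : Set (Formula Sig V) :=
  {φ ∈ Ψ | satisfies I A s φ}

/-- Ψ is closed under subformulas. -/
def SubClosed {Sig V : Type} (Ψ : Set (Formula Sig V)) : Prop :=
  (∀ φ : Formula Sig V, Formula.neg φ ∈ Ψ → φ ∈ Ψ) ∧
  (∀ φ ψ : Formula Sig V, Formula.and φ ψ ∈ Ψ → φ ∈ Ψ ∧ ψ ∈ Ψ) ∧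
  (∀ (X : Set V) (φ : Formula Sig V), Formula.dmod X φ ∈ Ψ → φ ∈ Ψ)

/-- Locality: assignments in the team agreeing on the free variables of φ satisfy φ alike. -/
theorem locality {Sig V O : Type} (I : Sig → List O → Prop) (A : Set (V → O)) :
    ∀ (φ : Formula Sig V) (s t : V → O), s ∈ A → t ∈ A → agree s t (free φ) →
      (satisfies I A s φ ↔ satisfies I A t φ)
  | .atom p xs, s, t, _, _, h => by
      simp only [satisfies]
      rw [List.map_congr_left (fun x hx => h x hx)]
  | .neg φ, s, t, hs, ht, h => by
      simp only [satisfies]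
      exact not_congr (locality I A φ s t hs ht h)
  | .and φ ψ, s, t, hs, ht, h => by
      simp only [satisfies]
      exact and_congr
        (locality I A φ s t hs ht fun x hx => h x (Set.mem_union_left _ hx))
        (locality I A ψ s t hs ht fun x hx => h x (Set.mem_union_right _ hx))
  | .dmod X φ, s, t, hs, ht, h => by
      simp only [satisfies]
      constructor
      · intro hσ u hu hag
        exact hσ u hu fun x hx => (h x hx).trans (hag x hx)
      · intro hσ u hu hag
        exact hσ u hu fun x hx => (h x hx).symm.trans (hag x hx)
  | .dep X y, s, t, hs, ht, h => by
      simp only [satisfies]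
      constructor
      · intro hσ u hu hag
        have h1 := hσ t ht h
        have h2 := hσ u hu fun x hx => (h x hx).trans (hag x hx)
        exact h1.symm.trans h2
      · intro hσ u hu hag
        have h1 := hσ s hs fun x hx => (h x hx).symm
        have h2 := hσ u hu fun x hx => (h x hx).symm.trans (hag x hx)
        exact h1.symm.trans h2

/-- The set of Ψ-types satisfied in a dependence model forms a type model:
existential witnesses for ¬𝔻_X¬ψ exist, and any two realized types are ∼_∅-related. -/
theorem realized_types_form_type_model {Sig V O : Type}
    (I : Sig → List O → Prop) (A : Set (V → O)) (Ψ : Set (Formula Sig V))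
    (hsub : SubClosed Ψ) (hdep : ∀ (X : Set V) (y : V), Formula.dep X y ∈ Ψ) :
    (∀ s ∈ A, ∀ (X : Set V) (ψ : Formula Sig V),
      Formula.neg (Formula.dmod X (Formula.neg ψ)) ∈ typeOf I A Ψ s →
      ∃ t ∈ A, ψ ∈ typeOf I A Ψ t ∧ simRel (typeOf I A Ψ s) (typeOf I A Ψ t) X) ∧
    (∀ s ∈ A, ∀ t ∈ A, simRel (typeOf I A Ψ s) (typeOf I A Ψ t) (∅ : Set V)) := by
  have simOf : ∀ s ∈ A, ∀ t ∈ A, ∀ X : Set V,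
      agree s t (depCl (typeOf I A Ψ s) X) →
      simRel (typeOf I A Ψ s) (typeOf I A Ψ t) X := by
    intro s hs t ht X hag
    unfold simRel
    ext φ
    simp only [Set.mem_setOf_eq, typeOf]
    constructor
    · rintro ⟨⟨h1, h2⟩, h3⟩
      exact ⟨⟨h1, (locality I A φ s t hs ht fun x hx => hag x (h3 hx)).mp h2⟩, h3⟩
    · rintro ⟨⟨h1, h2⟩, h3⟩
      exact ⟨⟨h1, (locality I A φ s t hs ht fun x hx => hag x (h3 hx)).mpr h2⟩, h3⟩
  constructor
  · intro s hs X ψ hmem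
    obtain ⟨hΨ, hsat⟩ := hmem
    have hψΨ : ψ ∈ Ψ := hsub.1 _ (hsub.2.2 _ _ (hsub.1 _ hΨ))
    simp only [satisfies, not_forall, not_not] at hsat
    obtain ⟨t, ht, hag, htψ⟩ := hsat
    refine ⟨t, ht, ⟨hψΨ, htψ⟩, simOf s hs t ht X ?_⟩
    intro y hy
    exact hy.2 t ht hag
  · intro s hs t ht
    apply simOf s hs t ht
    intro y hy
    exact hy.2 t ht (fun x hx => hx.elim)
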